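/- Let d ≥ 2 be an integer and let ψ(x) = x + Σ_{n≥2} β_n xⁿ be a formal power series over ℝ with vanishing constant coefficient and linear coefficient 1 that satisfies, as an identity of formal power series, the invariance equation ψ(x) − 2(x + ψ(x))^d = ψ( ψ(x) − (x + ψ(x))^d ). Then β_n = 0 for every n that is not of the form d + k(d−1) with k ≥ 0 an integer; moreover β_d = −2^d and β_{2d−1} = −3d·2^{2d−1}. -/

import Mathlib

/-!
Comparing coefficients of `xⁿ` in the invariance equation, the terms `k = 1` and `k = n` of the
composition both contain `βₙ`, and one gets
`βₙ = -[xⁿ](x + ψ)^d - ∑_{1<k<n} β_k [xⁿ](ψ - (x + ψ)^d)^k`, whose right side involves only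
`β_m` with `m < n`. Write `ψ = x φ`. Then `x + ψ = x (1 + φ)` and
`ψ - (x + ψ)^d = x (φ - x^(d-1) (1 + φ)^d)`, so if `φ` agrees with a series in `x^(d-1)` below
degree `M`, so do these factors and their powers, and the recursion shows that `φ` agrees with a
series in `x^(d-1)` below degree `M + 1`. Only `β_n` with `d - 1 ∣ n - 1` survive, and at
`n = d` and `n = 2d - 1` the recursion has one or two surviving terms, each given by the
first-order expansion `(a + b x^t + O(x^(t+1)))^k = a^k + k a^(k-1) b x^t + O(x^(t+1))`.
-/

open PowerSeries

/-- Composition `f ∘ g` of formal power series (intended for `g` with zero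
constant coefficient, in which case `coeff n (g ^ k) = 0` for `k > n` and the
finite sum below gives the usual substitution of `g` into `f`). -/
noncomputable def psComp (f g : PowerSeries ℝ) : PowerSeries ℝ :=
  PowerSeries.mk fun n =>
    ∑ k ∈ Finset.range (n + 1), PowerSeries.coeff (R := ℝ) k f * PowerSeries.coeff (R := ℝ) n (g ^ k)

namespace PowerSeries

variable {R : Type*} [CommRing R]

theorem X_dvd_of_coeff_zero_eq_zero {f : R⟦X⟧} (hf : coeff 0 f = 0) : X ∣ f :=
  X_dvd_iff.mpr (by rwa [← coeff_zero_eq_constantCoeff_apply])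

theorem coeff_pow_eq_zero_of_lt {f : R⟦X⟧} (hf : coeff 0 f = 0) {k m : ℕ} (hm : m < k) :
    coeff m (f ^ k) = 0 :=
  X_pow_dvd_iff.mp (pow_dvd_pow_of_dvd (X_dvd_of_coeff_zero_eq_zero hf) k) m hm

theorem coeff_X_mul_pow (u : R⟦X⟧) (m k : ℕ) :
    coeff (m + k) ((X * u) ^ k) = coeff m (u ^ k) := by
  rw [mul_pow, coeff_X_pow_mul]

theorem coeff_pow_self {f : R⟦X⟧} (hf : coeff 0 f = 0) (k : ℕ) :
    coeff k (f ^ k) = coeff 1 f ^ k := by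
  obtain ⟨u, rfl⟩ := X_dvd_of_coeff_zero_eq_zero hf
  simpa using coeff_X_mul_pow u 0 k

theorem coeff_pow_of_coeff_eq_zero {u : R⟦X⟧} {t : ℕ} (ht : 0 < t)
    (hu : ∀ j, 0 < j → j < t → coeff j u = 0) (k : ℕ) :
    coeff t (u ^ k) = k * coeff 0 u ^ (k - 1) * coeff t u := by
  set c := coeff 0 u
  -- with `q = u - C c`: `(C c + q) ^ k ≡ C c ^ k + k C c ^ (k - 1) q` mod `q ^ 2`,
  -- and `X ^ (2 * t) ∣ q ^ 2`
  have hq : X ^ t ∣ u - C c := X_pow_dvd_iff.mpr fun j hj => by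
    rcases Nat.eq_zero_or_pos j with rfl | hj0
    · simp [c]
    · simp [coeff_C, hj0.ne', hu j hj0 hj]
  have hsq := (pow_dvd_pow_of_dvd hq 2).trans (sq_dvd_add_pow_sub_sub (u - C c) (C c) k)
  rw [← pow_mul] at hsq
  have h := X_pow_dvd_iff.mp hsq t (by omega)
  have hlin : C c ^ (k - 1) * (u - C c) * k = C (k * c ^ (k - 1)) * (u - C c) := by
    simp only [map_mul, map_pow, map_natCast]; ring
  have hpow : C c ^ k = C (c ^ k) := (map_pow C c k).symm
  rw [add_sub_cancel, hlin, hpow] at h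
  simp only [map_sub, coeff_C_mul, coeff_C, if_neg ht.ne'] at h
  linear_combination h

theorem coeff_add_pow_of_coeff_eq_zero {f : R⟦X⟧} (hf : coeff 0 f = 0) {t : ℕ} (ht : 0 < t)
    (hgap : ∀ j, 1 < j → j < t + 1 → coeff j f = 0) (k : ℕ) :
    coeff (t + k) (f ^ k) = k * coeff 1 f ^ (k - 1) * coeff (t + 1) f := by
  obtain ⟨u, rfl⟩ := X_dvd_of_coeff_zero_eq_zero hf
  simp only [coeff_X_mul_pow, coeff_succ_X_mul]
  exact coeff_pow_of_coeff_eq_zero ht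
    (fun j hj hjt => by simpa using hgap (j + 1) (by omega) (by omega)) k

def supportDvdBelow (R : Type*) [CommRing R] (e M : ℕ) : Subring R⟦X⟧ where
  carrier := {f | ∀ n < M, ¬ e ∣ n → coeff n f = 0}
  mul_mem' {f g} hf hg n hn hne := by
    rw [coeff_mul]
    refine Finset.sum_eq_zero fun ⟨i, j⟩ hij => ?_
    rw [Finset.HasAntidiagonal.mem_antidiagonal] at hij
    by_cases hi : e ∣ i
    · rw [hg j (by omega) fun hj => hne (hij ▸ dvd_add hi hj), mul_zero]
    · rw [hf i (by omega) hi, zero_mul]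
  one_mem' n _ hne := by
    rw [coeff_one, if_neg]
    rintro rfl
    exact hne (dvd_zero e)
  add_mem' hf hg n hn hne := by simp [hf n hn hne, hg n hn hne]
  zero_mem' := by simp
  neg_mem' hf n hn hne := by simp [hf n hn hne]

theorem X_pow_mem_supportDvdBelow (e M : ℕ) : (X : R⟦X⟧) ^ e ∈ supportDvdBelow R e M :=
  fun n _ hne => by rw [coeff_X_pow, if_neg (by rintro rfl; exact hne dvd_rfl)]

end PowerSeries

structure IsCenterManifoldSeries (d : ℕ) (ψ : ℝ⟦X⟧) : Prop where
  coeff_zero : coeff 0 ψ = 0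
  coeff_one : coeff 1 ψ = 1
  invariance : ψ - 2 * (X + ψ) ^ d = psComp ψ (ψ - (X + ψ) ^ d)

namespace IsCenterManifoldSeries

variable {d : ℕ} {ψ : ℝ⟦X⟧}

theorem coeff_zero_X_add (hψ : IsCenterManifoldSeries d ψ) : coeff 0 (X + ψ) = 0 := by
  rw [map_add, coeff_zero_X, zero_add, hψ.coeff_zero]

theorem coeff_one_X_add (hψ : IsCenterManifoldSeries d ψ) : coeff 1 (X + ψ) = 2 := by
  rw [map_add, coeff_X, if_pos rfl, hψ.coeff_one]; norm_num

theorem coeff_zero_sub_pow (hd : d ≠ 0) (hψ : IsCenterManifoldSeries d ψ) :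
    coeff 0 (ψ - (X + ψ) ^ d) = 0 := by
  rw [map_sub, hψ.coeff_zero, coeff_pow_eq_zero_of_lt hψ.coeff_zero_X_add (by omega), sub_zero]

theorem coeff_one_sub_pow (hd : 2 ≤ d) (hψ : IsCenterManifoldSeries d ψ) :
    coeff 1 (ψ - (X + ψ) ^ d) = 1 := by
  rw [map_sub, hψ.coeff_one, coeff_pow_eq_zero_of_lt hψ.coeff_zero_X_add (by omega), sub_zero]

theorem coeff_eq_neg_sub_sum (hd : 2 ≤ d) (hψ : IsCenterManifoldSeries d ψ) {n : ℕ}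
    (hn : 2 ≤ n) :
    coeff n ψ = -coeff n ((X + ψ) ^ d) -
      ∑ k ∈ Finset.Ico 2 n, coeff k ψ * coeff n ((ψ - (X + ψ) ^ d) ^ k) := by
  have h := congrArg (coeff n) hψ.invariance
  rw [psComp, coeff_mk, Finset.sum_range_succ, Finset.range_eq_Ico,
    Finset.sum_eq_sum_Ico_succ_bot (by omega), Finset.sum_eq_sum_Ico_succ_bot (by omega),
    coeff_pow_self (hψ.coeff_zero_sub_pow (by omega)), hψ.coeff_one_sub_pow hd,
    hψ.coeff_zero, hψ.coeff_one] at h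
  simp only [zero_add, Nat.reduceAdd, pow_one, one_pow, map_sub, two_mul, map_add] at h
  linear_combination -h

theorem mem_supportDvdBelow_succ (hd : 2 ≤ d) {φ : ℝ⟦X⟧}
    (hψ : IsCenterManifoldSeries d (X * φ)) {M : ℕ}
    (hφ : φ ∈ supportDvdBelow ℝ (d - 1) M) :
    φ ∈ supportDvdBelow ℝ (d - 1) (M + 1) := by
  intro n hn hne
  rcases (Nat.lt_succ_iff.mp hn).lt_or_eq with hlt | rfl
  · exact hφ n hlt hne
  have hn1 : 1 ≤ n := Nat.pos_of_ne_zero fun h => hne (h ▸ dvd_zero _)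
  have hX : X + X * φ = X * (1 + φ) := by ring
  have hg : X * φ - (X + X * φ) ^ d = X * (φ - X ^ (d - 1) * (1 + φ) ^ d) := by
    rw [hX, mul_pow, mul_sub, ← mul_assoc, ← pow_succ', Nat.sub_add_cancel (by omega : 1 ≤ d)]
  have hH : coeff (n + 1) ((X + X * φ) ^ d) = 0 := by
    rcases lt_or_ge (n + 1) d with hlt | hle
    · exact coeff_pow_eq_zero_of_lt hψ.coeff_zero_X_add hlt
    obtain ⟨m, hm⟩ := Nat.exists_eq_add_of_le' hle
    rw [hm, hX, coeff_X_mul_pow]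
    refine pow_mem (add_mem (one_mem _) hφ) d m (by omega) fun hdvd => hne ?_
    rw [show n = m + (d - 1) by omega]
    exact dvd_add hdvd dvd_rfl
  have hγ : φ - X ^ (d - 1) * (1 + φ) ^ d ∈ supportDvdBelow ℝ (d - 1) n :=
    sub_mem hφ (mul_mem (X_pow_mem_supportDvdBelow _ _) (pow_mem (add_mem (one_mem _) hφ) d))
  have hsum : ∀ k ∈ Finset.Ico 2 (n + 1),
      coeff k (X * φ) * coeff (n + 1) ((X * φ - (X + X * φ) ^ d) ^ k) = 0 := by
    intro k hk
    rw [Finset.mem_Ico] at hk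
    obtain ⟨j, rfl⟩ : ∃ j, k = j + 1 := ⟨k - 1, by omega⟩
    rw [coeff_succ_X_mul]
    by_cases hj : d - 1 ∣ j
    · rw [hg, show n + 1 = (n - j) + (j + 1) by omega, coeff_X_mul_pow,
        pow_mem hγ _ _ (by omega) ?_, mul_zero]
      intro hdvd
      rw [show n = j + (n - j) by omega] at hne
      exact hne (dvd_add hj hdvd)
    · rw [hφ j (by omega) hj, zero_mul]
  have key := hψ.coeff_eq_neg_sub_sum hd (n := n + 1) (by omega)
  rwa [coeff_succ_X_mul, hH, Finset.sum_eq_zero hsum, neg_zero, sub_zero] at key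

theorem coeff_succ_eq_zero_of_not_dvd (hd : 2 ≤ d) (hψ : IsCenterManifoldSeries d ψ) {n : ℕ}
    (hn : ¬ d - 1 ∣ n) : coeff (n + 1) ψ = 0 := by
  obtain ⟨φ, rfl⟩ := X_dvd_of_coeff_zero_eq_zero hψ.coeff_zero
  have hφ : ∀ M, φ ∈ supportDvdBelow ℝ (d - 1) M := by
    intro M
    induction M with
    | zero => exact fun n hn => absurd hn (Nat.not_lt_zero n)
    | succ M ih => exact hψ.mem_supportDvdBelow_succ hd ih
  rw [coeff_succ_X_mul]
  exact hφ (n + 1) n (Nat.lt_succ_self n) hn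

theorem coeff_eq_zero_of_one_lt_of_lt (hd : 2 ≤ d) (hψ : IsCenterManifoldSeries d ψ) {n : ℕ}
    (hn1 : 1 < n) (hnd : n < d) : coeff n ψ = 0 := by
  obtain ⟨m, rfl⟩ : ∃ m, n = m + 1 := ⟨n - 1, by omega⟩
  exact hψ.coeff_succ_eq_zero_of_not_dvd hd (Nat.not_dvd_of_pos_of_lt (by omega) (by omega))

theorem coeff_self (hd : 2 ≤ d) (hψ : IsCenterManifoldSeries d ψ) : coeff d ψ = -2 ^ d := by
  have hsum : ∀ k ∈ Finset.Ico 2 d, coeff k ψ * coeff d ((ψ - (X + ψ) ^ d) ^ k) = 0 :=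
    fun k hk => by
      rw [Finset.mem_Ico] at hk
      rw [hψ.coeff_eq_zero_of_one_lt_of_lt hd (by omega) hk.2, zero_mul]
  rw [hψ.coeff_eq_neg_sub_sum hd hd, Finset.sum_eq_zero hsum,
    coeff_pow_self hψ.coeff_zero_X_add, hψ.coeff_one_X_add, sub_zero]

theorem coeff_two_mul_sub_one (hd : 2 ≤ d) (hψ : IsCenterManifoldSeries d ψ) :
    coeff (2 * d - 1) ψ = -(3 * d * 2 ^ (2 * d - 1)) := by
  have hidx : d - 1 + d = 2 * d - 1 := by omega
  have hsum : ∑ k ∈ Finset.Ico 2 (2 * d - 1),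
      coeff k ψ * coeff (2 * d - 1) ((ψ - (X + ψ) ^ d) ^ k) =
      coeff d ψ * coeff (2 * d - 1) ((ψ - (X + ψ) ^ d) ^ d) := by
    refine Finset.sum_eq_single_of_mem d (Finset.mem_Ico.mpr ⟨hd, by omega⟩) fun k hk hkd => ?_
    rw [Finset.mem_Ico] at hk
    obtain ⟨j, rfl⟩ : ∃ j, k = j + 1 := ⟨k - 1, by omega⟩
    rw [hψ.coeff_succ_eq_zero_of_not_dvd hd, zero_mul]
    rintro ⟨c, hc⟩
    rcases c with _ | _ | c
    · omega
    · omega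
    · have : (d - 1) * 2 ≤ (d - 1) * (c + 1 + 1) := Nat.mul_le_mul_left _ (by omega)
      omega
  have hH : coeff (2 * d - 1) ((X + ψ) ^ d) = (d : ℝ) * 2 ^ (d - 1) * -2 ^ d := by
    have hgap : ∀ j, 1 < j → j < d - 1 + 1 → coeff j (X + ψ) = 0 := fun j hj1 hjd => by
      rw [map_add, coeff_X, if_neg (by omega), zero_add,
        hψ.coeff_eq_zero_of_one_lt_of_lt hd hj1 (by omega)]
    rw [← hidx, coeff_add_pow_of_coeff_eq_zero hψ.coeff_zero_X_add (by omega) hgap,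
      hψ.coeff_one_X_add, Nat.sub_add_cancel (by omega), map_add, coeff_X, if_neg (by omega),
      zero_add, hψ.coeff_self hd]
  have hG : coeff (2 * d - 1) ((ψ - (X + ψ) ^ d) ^ d) = (d : ℝ) * (-2 ^ d - 2 ^ d) := by
    have hgap : ∀ j, 1 < j → j < d - 1 + 1 → coeff j (ψ - (X + ψ) ^ d) = 0 := by
      intro j hj1 hjd
      rw [map_sub, hψ.coeff_eq_zero_of_one_lt_of_lt hd hj1 (by omega),
        coeff_pow_eq_zero_of_lt hψ.coeff_zero_X_add (by omega), sub_zero]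
    rw [← hidx,
      coeff_add_pow_of_coeff_eq_zero (hψ.coeff_zero_sub_pow (by omega)) (by omega) hgap,
      hψ.coeff_one_sub_pow hd, Nat.sub_add_cancel (by omega), map_sub, hψ.coeff_self hd,
      coeff_pow_self hψ.coeff_zero_X_add, hψ.coeff_one_X_add, one_pow, mul_one]
  rw [hψ.coeff_eq_neg_sub_sum hd (by omega), hsum, hH, hG, hψ.coeff_self hd]
  obtain ⟨e, rfl⟩ : ∃ e, d = e + 1 := ⟨d - 1, by omega⟩
  rw [show 2 * (e + 1) - 1 = 2 * e + 1 by omega, Nat.add_sub_cancel]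
  push_cast
  ring

end IsCenterManifoldSeries

/-- structure of the Taylor coefficients of the center manifold. -/
theorem stmt4 (d : ℕ) (hd : 2 ≤ d) (ψ : PowerSeries ℝ)
    (h0 : PowerSeries.coeff (R := ℝ) 0 ψ = 0) (h1 : PowerSeries.coeff (R := ℝ) 1 ψ = 1)
    (hinv : ψ - 2 * (PowerSeries.X + ψ) ^ d =
      psComp ψ (ψ - (PowerSeries.X + ψ) ^ d)) :
    (∀ n : ℕ, 2 ≤ n → (¬ ∃ k : ℕ, n = d + k * (d - 1)) →
      PowerSeries.coeff (R := ℝ) n ψ = 0) ∧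
    PowerSeries.coeff (R := ℝ) d ψ = -(2 : ℝ) ^ d ∧
    PowerSeries.coeff (R := ℝ) (2 * d - 1) ψ = -(3 * d * 2 ^ (2 * d - 1)) := by
  have hψ : IsCenterManifoldSeries d ψ := ⟨h0, h1, hinv⟩
  refine ⟨fun n hn hnk => ?_, hψ.coeff_self hd, hψ.coeff_two_mul_sub_one hd⟩
  obtain ⟨m, rfl⟩ : ∃ m, n = m + 1 := ⟨n - 1, by omega⟩
  refine hψ.coeff_succ_eq_zero_of_not_dvd hd fun ⟨c, hc⟩ => hnk ⟨c - 1, ?_⟩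
  rcases c with _ | c
  · omega
  · rw [hc, Nat.add_sub_cancel, mul_add, mul_one, mul_comm]
    omega
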